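/- Let (X, 𝓕, μ) be a σ-finite measure space, Φ an N-function satisfying the Δ₂-condition globally, and φ : X → X a nonsingular measurable map with μ(φ⁻¹(F)) ≤ c μ(F) for every F ∈ 𝓕 and some c > 0. If there exists f ∈ L^Φ(μ) which is an irregular vector for C_φ, i.e., liminf_{n→∞} N_Φ(f ∘ φ^n) = 0 and limsup_{n→∞} N_Φ(f ∘ φ^n) = ∞, then there exist a nonempty countable family {F_i}_{i∈I} of measurable sets with 0 < μ(F_i) < ∞ for all i ∈ I and a strictly increasing sequence (β_j)_{j∈ℕ} of positive integers such that: (I) for every i ∈ I, lim_{j→∞} Φ⁻¹(1/μ(φ^{-β_j}(F_i))) = ∞, and (II) sup{ Φ⁻¹(1/μ(F_i)) / Φ⁻¹(1/μ(φ^{-n}(F_i))) : i ∈ I, n ∈ ℕ } = ∞. -/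

import Mathlib

open MeasureTheory Filter Topology Set
open scoped ENNReal NNReal

noncomputable section

/-- A Young function: an even convex function `Φ : ℝ → [0,∞]` with `Φ 0 = 0` and
`Φ x → ∞` as `x → ∞`. -/
structure IsYoungFunction (Φ : ℝ → ℝ≥0∞) : Prop where
  even : ∀ x : ℝ, Φ (-x) = Φ x
  convex : ∀ x y : ℝ, ∀ a b : ℝ≥0, a + b = 1 →
    Φ ((a : ℝ) * x + (b : ℝ) * y) ≤ (a : ℝ≥0∞) * Φ x + (b : ℝ≥0∞) * Φ y
  map_zero : Φ 0 = 0
  tendsto_atTop : Tendsto Φ atTop (nhds ⊤)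

/-- An N-function: a finite-valued Young function vanishing exactly at `0`, with
`Φ x / x → 0` as `x → 0⁺` and `Φ x / x → ∞` as `x → ∞`. -/
structure IsNFunction (Φ : ℝ → ℝ≥0∞) extends IsYoungFunction Φ : Prop where
  lt_top : ∀ x : ℝ, Φ x < ⊤
  eq_zero_iff : ∀ x : ℝ, Φ x = 0 ↔ x = 0
  tendsto_div_zero : Tendsto (fun x : ℝ => Φ x / ENNReal.ofReal x) (nhdsWithin 0 (Set.Ioi 0)) (nhds 0)
  tendsto_div_atTop : Tendsto (fun x : ℝ => Φ x / ENNReal.ofReal x) atTop (nhds ⊤)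

/-- The Δ₂-condition, globally: `Φ (2 x) ≤ K Φ x` for all `x ≥ 0`, for some `K > 0`. -/
def Delta2Global (Φ : ℝ → ℝ≥0∞) : Prop :=
  ∃ K : ℝ≥0, 0 < K ∧ ∀ x : ℝ, 0 ≤ x → Φ (2 * x) ≤ (K : ℝ≥0∞) * Φ x

/-- The generalized inverse `Φ⁻¹ (y) = inf {x ≥ 0 : Φ x > y}` (with `inf ∅ = ∞`). -/
def youngInv (Φ : ℝ → ℝ≥0∞) (y : ℝ≥0∞) : ℝ≥0∞ :=
  ⨅ (x : ℝ) (_ : 0 ≤ x) (_ : y < Φ x), ENNReal.ofReal x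

/-- The Luxemburg (gauge) norm `N_Φ (f) = inf {k > 0 : ∫ Φ (f / k) dμ ≤ 1}`
(with `inf ∅ = ∞`). -/
def luxNorm {X : Type*} [MeasurableSpace X] (Φ : ℝ → ℝ≥0∞) (μ : Measure X)
    (f : X → ℝ) : ℝ≥0∞ :=
  ⨅ (k : ℝ) (_ : 0 < k) (_ : ∫⁻ x, Φ (f x / k) ∂μ ≤ 1), ENNReal.ofReal k

/-- Membership in the Orlicz space `L^Φ(μ)`: `f` is measurable and
`∫ Φ (k f) dμ < ∞` for some `k > 0`. -/
def MemOrlicz {X : Type*} [MeasurableSpace X] (Φ : ℝ → ℝ≥0∞) (μ : Measure X)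
    (f : X → ℝ) : Prop :=
  Measurable f ∧ ∃ k : ℝ, 0 < k ∧ ∫⁻ x, Φ (k * f x) ∂μ < ⊤

/-- Li-Yorke chaos for the composition operator `C_φ f = f ∘ φ` on `L^Φ(μ)`:
there is an uncountable set `S ⊆ L^Φ(μ)` of pairwise not μ-a.e. equal functions such
that every pair of not μ-a.e. equal members is a Li-Yorke pair for `C_φ`. -/
def CompLiYorkeChaotic {X : Type*} [MeasurableSpace X] (Φ : ℝ → ℝ≥0∞) (μ : Measure X)
    (φ : X → X) : Prop :=
  ∃ S : Set (X → ℝ), ¬ S.Countable ∧ (∀ f ∈ S, MemOrlicz Φ μ f) ∧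
    (∀ f ∈ S, ∀ g ∈ S, f ≠ g → ¬ f =ᵐ[μ] g) ∧
    ∀ f ∈ S, ∀ g ∈ S, ¬ f =ᵐ[μ] g →
      atTop.liminf (fun n : ℕ => luxNorm Φ μ ((f - g) ∘ φ^[n])) = 0 ∧
      0 < atTop.limsup (fun n : ℕ => luxNorm Φ μ ((f - g) ∘ φ^[n]))

section Helpers

variable {Φ : ℝ → ℝ≥0∞}

lemma IsNFunction.mono (hΦ : IsNFunction Φ) {x y : ℝ} (hx : 0 ≤ x) (hxy : x ≤ y) :
    Φ x ≤ Φ y := by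
  rcases eq_or_lt_of_le (hx.trans hxy) with hy | hy
  · obtain rfl : x = y := le_antisymm hxy (hy ▸ hx)
    exact le_rfl
  · set a : ℝ≥0 := ⟨x / y, by positivity⟩ with ha
    have ha1 : a ≤ 1 := by
      rw [← NNReal.coe_le_coe]
      exact (div_le_one hy).2 hxy
    have hab : a + (1 - a) = 1 := add_tsub_cancel_of_le ha1
    have := hΦ.convex y 0 a (1 - a) hab
    have hax : (a : ℝ) * y + ((1 - a : ℝ≥0) : ℝ) * 0 = x := by
      simp [ha, div_mul_cancel₀, hy.ne']
      exact div_mul_cancel₀ x hy.ne'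
    rw [hax, hΦ.map_zero, mul_zero, add_zero] at this
    calc Φ x ≤ (a : ℝ≥0∞) * Φ y := this
    _ ≤ 1 * Φ y := by
        gcongr
        exact_mod_cast ha1
    _ = Φ y := one_mul _

lemma IsNFunction.abs_eq (hΦ : IsNFunction Φ) (x : ℝ) : Φ |x| = Φ x := by
  rcases abs_cases x with ⟨h, _⟩ | ⟨h, _⟩
  · rw [h]
  · rw [h, hΦ.even]

lemma IsNFunction.scale_le (hΦ : IsNFunction Φ) {t : ℝ≥0} (ht : t ≤ 1) (x : ℝ) :
    Φ ((t : ℝ) * x) ≤ (t : ℝ≥0∞) * Φ x := by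
  have hab : t + (1 - t) = 1 := add_tsub_cancel_of_le ht
  have := hΦ.convex x 0 t (1 - t) hab
  simpa [hΦ.map_zero] using this

lemma IsNFunction.pos (hΦ : IsNFunction Φ) {x : ℝ} (hx : x ≠ 0) : 0 < Φ x :=
  pos_iff_ne_zero.2 fun h => hx ((hΦ.eq_zero_iff x).1 h)

lemma IsNFunction.measurable (hΦ : IsNFunction Φ) : Measurable Φ := by
  have hG : Monotone (fun x : ℝ => if x ≤ 0 then 0 else Φ x) := by
    intro x y hxy
    dsimp only
    split_ifs with h1 h2 h2
    · exact le_rfl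
    · exact zero_le
    · exact absurd (hxy.trans h2) h1
    · exact hΦ.mono (le_of_not_ge h1) hxy
  have : Φ = fun x => (fun x : ℝ => if x ≤ 0 then 0 else Φ x) |x| := by
    funext x
    by_cases h : x = 0
    · simp [h, hΦ.map_zero]
    · have : ¬ |x| ≤ 0 := by simpa using abs_pos.2 h
      simp [this, hΦ.abs_eq]
  rw [this]
  exact hG.measurable.comp measurable_abs

end Helpers
section Helpers2

variable {Φ : ℝ → ℝ≥0∞}

lemma delta2_pow (hΦ : IsNFunction Φ) {K : ℝ≥0}
    (hK : ∀ x : ℝ, 0 ≤ x → Φ (2 * x) ≤ (K : ℝ≥0∞) * Φ x) (m : ℕ) :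
    ∀ x : ℝ, 0 ≤ x → Φ (2 ^ m * x) ≤ (K : ℝ≥0∞) ^ m * Φ x := by
  induction m with
  | zero => intro x hx; simp
  | succ m ih =>
      intro x hx
      have h2 : (2 : ℝ) ^ (m + 1) * x = 2 * (2 ^ m * x) := by ring
      rw [h2]
      calc Φ (2 * (2 ^ m * x)) ≤ (K : ℝ≥0∞) * Φ (2 ^ m * x) := hK _ (by positivity)
      _ ≤ (K : ℝ≥0∞) * ((K : ℝ≥0∞) ^ m * Φ x) := by gcongr; exact ih x hx
      _ = (K : ℝ≥0∞) ^ (m + 1) * Φ x := by ring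

-- youngInv facts
lemma youngInv_le (hΦ : IsNFunction Φ) {y : ℝ≥0∞} {x : ℝ} (hx : 0 ≤ x) (h : y < Φ x) :
    youngInv Φ y ≤ ENNReal.ofReal x := by
  exact iInf_le_of_le x (iInf_le_of_le hx (iInf_le_of_le h le_rfl))

lemma le_youngInv (hΦ : IsNFunction Φ) {y : ℝ≥0∞} {t : ℝ}
    (h : ∀ x : ℝ, 0 ≤ x → y < Φ x → t ≤ x) :
    ENNReal.ofReal t ≤ youngInv Φ y :=
  le_iInf fun x => le_iInf fun hx => le_iInf fun hΦx =>
    ENNReal.ofReal_le_ofReal (h x hx hΦx)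


end Helpers2
section Helpers2b

variable {Φ : ℝ → ℝ≥0∞}

lemma exists_youngInv_wit (hΦ : IsNFunction Φ) {y : ℝ≥0∞} (hy : y ≠ ⊤) :
    ∃ x : ℝ, 0 ≤ x ∧ y < Φ x := by
  have h1 : ∀ᶠ x : ℝ in Filter.atTop, y < Φ x :=
    hΦ.tendsto_atTop.eventually (lt_mem_nhds (lt_top_iff_ne_top.2 hy))
  obtain ⟨x, hx1, hx2⟩ := (h1.and (Filter.eventually_ge_atTop (0:ℝ))).exists
  exact ⟨x, hx2, hx1⟩

lemma youngInv_lt_top (hΦ : IsNFunction Φ) {y : ℝ≥0∞} (hy : y ≠ ⊤) :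
    youngInv Φ y < ⊤ := by
  obtain ⟨x, hx, hyx⟩ := exists_youngInv_wit hΦ hy
  exact lt_of_le_of_lt (youngInv_le hΦ hx hyx) ENNReal.ofReal_lt_top

lemma youngInv_pos (hΦ : IsNFunction Φ) {y : ℝ≥0∞} (hy : y ≠ 0) :
    0 < youngInv Φ y := by
  have hΦ1 : Φ 1 ≠ 0 := (hΦ.pos one_ne_zero).ne'
  have hΦ1t : Φ 1 ≠ ⊤ := (hΦ.lt_top 1).ne
  refine lt_of_lt_of_le ?_ (le_iInf fun x => le_iInf fun hx => le_iInf fun hΦx => ?_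
    : min 1 (y / Φ 1) ≤ youngInv Φ y)
  · exact lt_min one_pos (ENNReal.div_pos hy hΦ1t)
  · rcases le_or_gt 1 x with h1 | h1
    · exact le_trans (min_le_left _ _) (by simpa using ENNReal.ofReal_le_ofReal h1)
    · have hb : Φ x ≤ ENNReal.ofReal x * Φ 1 := by
        have := hΦ.scale_le (t := ⟨x, hx⟩) (by exact NNReal.coe_le_coe.1 h1.le) 1
        rw [ENNReal.ofReal_eq_coe_nnreal hx]
        rw [mul_one] at this
        exact this
      have hlt : y < ENNReal.ofReal x * Φ 1 := lt_of_lt_of_le hΦx hb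
      exact le_trans (min_le_right _ _) (ENNReal.div_le_of_le_mul hlt.le)

lemma youngInv_zero (hΦ : IsNFunction Φ) : youngInv Φ 0 = 0 := by
  refine le_antisymm ?_ zero_le
  refine ENNReal.le_of_forall_pos_le_add fun ε hε _ => ?_
  rw [zero_add]
  have hp : (0:ℝ≥0∞) < Φ (ε:ℝ) := hΦ.pos (by exact_mod_cast hε.ne')
  calc youngInv Φ 0 ≤ ENNReal.ofReal (ε:ℝ) := youngInv_le hΦ ε.coe_nonneg hp
    _ = (ε : ℝ≥0∞) := ENNReal.ofReal_coe_nnreal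

lemma youngInv_top (hΦ : IsNFunction Φ) : youngInv Φ ⊤ = ⊤ := by
  rw [youngInv]
  simp only [iInf_eq_top]
  intro x hx hΦx
  exact absurd hΦx (by simp [(hΦ.lt_top x).le, not_lt, le_top])

end Helpers2b
section Helpers3

variable {Φ : ℝ → ℝ≥0∞} {X : Type*} [MeasurableSpace X] {μ : Measure X}

lemma lux_key (hΦ : IsNFunction Φ) {g : X → ℝ} (hg : Measurable g) {A : Set X}
    {δ k : ℝ} (hδ : 0 < δ) (hk : 0 < k) (hA : ∀ x ∈ A, δ ≤ |g x|)
    (hint : ∫⁻ x, Φ (g x / k) ∂μ ≤ 1) :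
    ENNReal.ofReal (δ / k) ≤ youngInv Φ (1 / μ A) := by
  have hpt : ∀ x ∈ A, Φ (δ / k) ≤ Φ (g x / k) := by
    intro x hx
    have habs : Φ (g x / k) = Φ (|g x| / k) := by
      rw [← hΦ.abs_eq (g x / k), abs_div, abs_of_pos hk]
    rw [habs]
    exact hΦ.mono (by positivity) (div_le_div_of_nonneg_right (hA x hx) hk.le)
  have h1 : Φ (δ / k) * μ A ≤ 1 := by
    calc Φ (δ / k) * μ A = ∫⁻ _ in A, Φ (δ / k) ∂μ := (setLIntegral_const A _).symm
    _ ≤ ∫⁻ x in A, Φ (g x / k) ∂μ :=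
        setLIntegral_mono (hΦ.measurable.comp (hg.div_const k)) hpt
    _ ≤ ∫⁻ x, Φ (g x / k) ∂μ := setLIntegral_le_lintegral _ _
    _ ≤ 1 := hint
  have h2 : Φ (δ / k) ≤ 1 / μ A :=
    (ENNReal.le_div_iff_mul_le (Or.inr one_ne_zero) (Or.inr ENNReal.one_ne_top)).2 h1
  refine le_youngInv hΦ fun x hx hΦx => ?_
  by_contra h
  push_neg at h
  exact absurd (lt_of_lt_of_le hΦx ((hΦ.mono hx h.le).trans h2)) (lt_irrefl _)

lemma luxNorm_lt_exists {g : X → ℝ} {ε : ℝ≥0∞} (h : luxNorm Φ μ g < ε) :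
    ∃ k : ℝ, 0 < k ∧ (∫⁻ x, Φ (g x / k) ∂μ ≤ 1) ∧ ENNReal.ofReal k < ε := by
  rw [luxNorm] at h
  simp only [iInf_lt_iff] at h
  obtain ⟨k, hk, hint, hlt⟩ := h
  exact ⟨k, hk, hint, hlt⟩

lemma luxNorm_le {g : X → ℝ} {k : ℝ} (hk : 0 < k) (h : ∫⁻ x, Φ (g x / k) ∂μ ≤ 1) :
    luxNorm Φ μ g ≤ ENNReal.ofReal k :=
  iInf_le_of_le k (iInf_le_of_le hk (iInf_le_of_le h le_rfl))

end Helpers3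
section Helpers4

variable {Φ : ℝ → ℝ≥0∞} {X : Type*} [MeasurableSpace X] {μ : Measure X}

lemma piece_bound (hΦ : IsNFunction Φ) {K : ℝ≥0} (hK0 : 0 < K)
    (hK : ∀ x : ℝ, 0 ≤ x → Φ (2 * x) ≤ (K : ℝ≥0∞) * Φ x) {m : ℕ}
    {P Q : Set X} (hP0 : μ P ≠ 0) (hPt : μ P ≠ ⊤) {S : ℝ≥0∞} (hS : S ≠ ⊤)
    (hm : 2 * S ≤ 2 ^ m)
    (hratio : youngInv Φ (1 / μ P) / youngInv Φ (1 / μ Q) ≤ S) :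
    μ Q ≤ (K : ℝ≥0∞) ^ (m + 1) * μ P := by
  by_cases hQ0 : μ Q = 0
  · simp [hQ0]
  set a := youngInv Φ (1 / μ P) with ha
  set b := youngInv Φ (1 / μ Q) with hb
  have hinvP0 : (1 : ℝ≥0∞) / μ P ≠ 0 := by simp [hPt]
  have hinvPt : (1 : ℝ≥0∞) / μ P ≠ ⊤ := by simp [ENNReal.div_eq_top, hP0]
  have ha0 : a ≠ 0 := (youngInv_pos hΦ hinvP0).ne'
  have hat : a ≠ ⊤ := (youngInv_lt_top hΦ hinvPt).ne
  have hb0 : b ≠ 0 := by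
    intro h
    rw [h, ENNReal.div_zero ha0] at hratio
    exact hS (top_le_iff.1 hratio)
  have hQt : μ Q ≠ ⊤ := by
    intro h
    apply hb0
    rw [hb, h]
    simpa using youngInv_zero hΦ
  have hinvQt : (1 : ℝ≥0∞) / μ Q ≠ ⊤ := by simp [ENNReal.div_eq_top, hQ0]
  have hbt : b ≠ ⊤ := (youngInv_lt_top hΦ hinvQt).ne
  have hS0 : S ≠ 0 := by
    intro h
    rw [h, le_zero_iff] at hratio
    exact (ENNReal.div_pos ha0 hbt).ne' hratio
  have hab : a / S ≤ b := by
    rw [ENNReal.div_le_iff hS0 hS]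
    rw [ENNReal.div_le_iff hb0 hbt] at hratio
    rwa [mul_comm] at hratio
  set α := a.toReal with hα
  have hα0 : 0 < α := ENNReal.toReal_pos ha0 hat
  have haα : a = ENNReal.ofReal α := (ENNReal.ofReal_toReal hat).symm
  set t := α / 2 ^ m with hT
  have ht0 : 0 < t := by positivity
  have hKm0 : ((K : ℝ≥0∞)) ^ (m + 1) ≠ 0 := by
    simp [pow_eq_zero_iff, hK0.ne']
  have hKmt : ((K : ℝ≥0∞)) ^ (m + 1) ≠ ⊤ := by
    exact (ENNReal.pow_lt_top ENNReal.coe_lt_top).ne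
  -- ofReal t < b
  have hoft : ENNReal.ofReal t < b := by
    have e1 : ENNReal.ofReal t = a / 2 ^ m := by
      rw [hT, ENNReal.ofReal_div_of_pos (by positivity),
        ENNReal.ofReal_pow (by norm_num), ENNReal.ofReal_ofNat, haα]
    have e2 : a / 2 ^ m ≤ a / (2 * S) := ENNReal.div_le_div_left hm _
    have e3 : a / (2 * S) = (a / S) / 2 := by
      rw [div_eq_mul_inv, div_eq_mul_inv, div_eq_mul_inv,
        ENNReal.mul_inv (Or.inl (by norm_num)) (Or.inl (by norm_num)),
        mul_comm ((2 : ℝ≥0∞))⁻¹, ← mul_assoc]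
    have e4 : (a / S) / 2 < a / S :=
      ENNReal.half_lt_self (ENNReal.div_pos ha0 hS).ne'
        (by simp [ENNReal.div_eq_top, hat, hS0])
    calc ENNReal.ofReal t = a / 2 ^ m := e1
      _ ≤ a / (2 * S) := e2
      _ = (a / S) / 2 := e3
      _ < a / S := e4
      _ ≤ b := hab
  -- Φ t ≤ 1 / μ Q hence μ Q ≤ (Φ t)⁻¹
  have hΦt : Φ t ≤ 1 / μ Q := by
    by_contra h
    push_neg at h
    exact absurd hoft (not_lt.2 (youngInv_le hΦ ht0.le h))
  have hμQ : μ Q ≤ (Φ t)⁻¹ := by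
    rw [one_div] at hΦt
    simpa using ENNReal.inv_le_inv.2 hΦt
  -- (Φ (2α))⁻¹ ≤ μ P
  have hnum : (Φ (2 * α))⁻¹ ≤ μ P := by
    have h2a : a < ENNReal.ofReal (2 * α) := by
      rw [haα]
      exact ENNReal.ofReal_lt_ofReal_iff (by positivity) |>.2 (by linarith)
    rw [ha, youngInv] at h2a
    simp only [iInf_lt_iff] at h2a
    obtain ⟨x, hx, hΦx, hxlt⟩ := h2a
    have hx2α : x < 2 * α := (ENNReal.ofReal_lt_ofReal_iff (by positivity)).1 hxlt
    have : (1 : ℝ≥0∞) / μ P < Φ (2 * α) := lt_of_lt_of_le hΦx (hΦ.mono hx hx2α.le)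
    rw [one_div] at this
    have h2 := ENNReal.inv_lt_inv.2 this
    rw [inv_inv] at h2
    exact h2.le
  -- Δ₂ iteration
  have hΔ2 : Φ (2 * α) ≤ (K : ℝ≥0∞) ^ (m + 1) * Φ t := by
    have h2m : (2 : ℝ) ^ (m + 1) * t = 2 * α := by
      rw [hT]
      field_simp
      ring
    calc Φ (2 * α) = Φ (2 ^ (m + 1) * t) := by rw [h2m]
      _ ≤ (K : ℝ≥0∞) ^ (m + 1) * Φ t := delta2_pow hΦ hK (m + 1) t ht0.le
  have hmid : (Φ t)⁻¹ ≤ (K : ℝ≥0∞) ^ (m + 1) * (Φ (2 * α))⁻¹ := by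
    have hinv := ENNReal.inv_le_inv.2 hΔ2
    have e : ((K : ℝ≥0∞) ^ (m + 1) * Φ t)⁻¹ = ((K : ℝ≥0∞) ^ (m + 1))⁻¹ * (Φ t)⁻¹ :=
      ENNReal.mul_inv (Or.inl hKm0) (Or.inl hKmt)
    rw [e] at hinv
    calc (Φ t)⁻¹ = (K : ℝ≥0∞) ^ (m + 1) * (((K : ℝ≥0∞) ^ (m + 1))⁻¹ * (Φ t)⁻¹) := by
          rw [← mul_assoc, ENNReal.mul_inv_cancel hKm0 hKmt, one_mul]
      _ ≤ (K : ℝ≥0∞) ^ (m + 1) * (Φ (2 * α))⁻¹ := by gcongr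
  calc μ Q ≤ (Φ t)⁻¹ := hμQ
    _ ≤ (K : ℝ≥0∞) ^ (m + 1) * (Φ (2 * α))⁻¹ := hmid
    _ ≤ (K : ℝ≥0∞) ^ (m + 1) * μ P := by gcongr

end Helpers4
section Helpers5

variable {Φ : ℝ → ℝ≥0∞} {X : Type*} [MeasurableSpace X] {μ : Measure X}

lemma luxNorm_le_of_lintegral_le (hΦ : IsNFunction Φ) {g : X → ℝ} {B : ℝ≥0∞}
    (hB : B ≠ ⊤) (h : ∫⁻ x, Φ (g x) ∂μ ≤ B) :
    luxNorm Φ μ g ≤ ENNReal.ofReal (max 1 (B.toReal + 1)) := by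
  set r : ℝ := max 1 (B.toReal + 1) with hr
  have hr1 : (1 : ℝ) ≤ r := le_max_left _ _
  have hr0 : (0 : ℝ) < r := lt_of_lt_of_le one_pos hr1
  set s : ℝ≥0 := Real.toNNReal (1 / r) with hs
  have hs1 : s ≤ 1 := by
    rw [hs, Real.toNNReal_le_one]
    rw [div_le_one hr0]
    exact hr1
  have hsr : (s : ℝ) = 1 / r := Real.coe_toNNReal _ (by positivity)
  have hpt : ∀ x, Φ (g x / r) ≤ (s : ℝ≥0∞) * Φ (g x) := by
    intro x
    have : g x / r = (s : ℝ) * g x := by rw [hsr]; ring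
    rw [this]
    exact hΦ.scale_le hs1 _
  have hint : ∫⁻ x, Φ (g x / r) ∂μ ≤ 1 := by
    calc ∫⁻ x, Φ (g x / r) ∂μ ≤ ∫⁻ x, (s : ℝ≥0∞) * Φ (g x) ∂μ := lintegral_mono hpt
    _ = (s : ℝ≥0∞) * ∫⁻ x, Φ (g x) ∂μ := lintegral_const_mul' _ _ ENNReal.coe_ne_top
    _ ≤ (s : ℝ≥0∞) * B := by gcongr
    _ ≤ (s : ℝ≥0∞) * ENNReal.ofReal r := by
        gcongr
        calc B = ENNReal.ofReal B.toReal := (ENNReal.ofReal_toReal hB).symm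
        _ ≤ ENNReal.ofReal r := ENNReal.ofReal_le_ofReal
            (le_trans (by linarith) (le_max_right (1:ℝ) (B.toReal + 1)))
    _ = 1 := by
        rw [← ENNReal.ofReal_coe_nnreal, hsr, ← ENNReal.ofReal_mul (by positivity)]
        rw [one_div, inv_mul_cancel₀ hr0.ne']
        exact ENNReal.ofReal_one
  exact luxNorm_le hr0 hint

lemma iterate_preimage_le {φ : X → X} (hφ : Measurable φ) {c : ℝ≥0}
    (hbound : ∀ F : Set X, MeasurableSet F → μ (φ ⁻¹' F) ≤ (c : ℝ≥0∞) * μ F)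
    {P : Set X} (hP : MeasurableSet P) (n : ℕ) :
    μ (φ^[n] ⁻¹' P) ≤ (c : ℝ≥0∞) ^ n * μ P := by
  induction n with
  | zero => simp
  | succ n ih =>
      have : φ^[n + 1] ⁻¹' P = φ ⁻¹' (φ^[n] ⁻¹' P) := by
        rw [Function.iterate_succ]
        rfl
      rw [this]
      calc μ (φ ⁻¹' (φ^[n] ⁻¹' P)) ≤ (c : ℝ≥0∞) * μ (φ^[n] ⁻¹' P) :=
            hbound _ (hφ.iterate n hP)
      _ ≤ (c : ℝ≥0∞) * ((c : ℝ≥0∞) ^ n * μ P) := by gcongr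
      _ = (c : ℝ≥0∞) ^ (n + 1) * μ P := by ring

end Helpers5

/-- Necessity part of Theorem 2.2: if `C_φ` has an irregular vector `f ∈ L^Φ(μ)`, then there
exist a nonempty countable family `{F i}` of measurable sets of finite positive measure and a
strictly increasing sequence `β` of positive integers satisfying conditions (I) and (II). -/
theorem exists_family_of_irregular_vector
    {X : Type*} [MeasurableSpace X] (μ : Measure X) [SigmaFinite μ]
    (Φ : ℝ → ℝ≥0∞) (hΦ : IsNFunction Φ) (hΔ : Delta2Global Φ)
    (φ : X → X) (hφ : Measurable φ) (c : ℝ≥0) (hc : 0 < c)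
    (hbound : ∀ F : Set X, MeasurableSet F → μ (φ ⁻¹' F) ≤ (c : ℝ≥0∞) * μ F)
    (f : X → ℝ) (hf : MemOrlicz Φ μ f)
    (hlim0 : atTop.liminf (fun n : ℕ => luxNorm Φ μ (f ∘ φ^[n])) = 0)
    (hlimtop : atTop.limsup (fun n : ℕ => luxNorm Φ μ (f ∘ φ^[n])) = ⊤) :
    ∃ (F : ℕ → Set X) (β : ℕ → ℕ), StrictMono β ∧ (∀ j, 0 < β j) ∧
      (∀ i, MeasurableSet (F i)) ∧ (∀ i, 0 < μ (F i)) ∧ (∀ i, μ (F i) < ⊤) ∧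
      (∀ i, Tendsto (fun j : ℕ => youngInv Φ (1 / μ (φ^[β j] ⁻¹' F i))) atTop (nhds ⊤)) ∧
      (⨆ (i : ℕ) (n : ℕ),
        youngInv Φ (1 / μ (F i)) / youngInv Φ (1 / μ (φ^[n] ⁻¹' F i))) = ⊤ := by
  obtain ⟨hfm, k₀, hk₀, hint₀⟩ := hf
  obtain ⟨K, hK0, hK⟩ := hΔ
  -- f is not a.e. zero
  set D : Set X := {x | f x ≠ 0} with hDdef
  have hD : MeasurableSet D := (hfm (measurableSet_singleton 0)).compl
  have hD0 : μ D ≠ 0 := by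
    intro h0
    have hone : ∀ n : ℕ, luxNorm Φ μ (f ∘ φ^[n]) ≤ 1 := by
      intro n
      have hnull : μ (φ^[n] ⁻¹' D) = 0 :=
        le_antisymm (by simpa [h0] using iterate_preimage_le hφ hbound hD n) zero_le
      have hae : (fun x => Φ ((f ∘ φ^[n]) x / 1)) =ᵐ[μ] (fun _ => 0) := by
        refine measure_mono_null ?_ hnull
        intro x hx
        simp only [Set.mem_setOf_eq] at hx ⊢
        intro hfx
        apply hx
        simp [Function.comp, hfx, hΦ.map_zero]
      have : ∫⁻ x, Φ ((f ∘ φ^[n]) x / 1) ∂μ ≤ 1 := by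
        rw [lintegral_congr_ae hae]
        simp
      simpa using luxNorm_le one_pos this
    have : atTop.limsup (fun n : ℕ => luxNorm Φ μ (f ∘ φ^[n])) ≤ 1 :=
      Filter.limsup_le_of_le (by isBoundedDefault) (Filter.Eventually.of_forall hone)
    rw [hlimtop] at this
    exact absurd this (by simp)
  -- level sets
  set E : ℤ → Set X := fun i => {x | (2:ℝ)^i ≤ |f x| ∧ |f x| < 2^(i+1)} with hEdef
  have hE : ∀ i, MeasurableSet (E i) := by
    intro i
    exact (measurableSet_le measurable_const hfm.abs).inter
      (measurableSet_lt hfm.abs measurable_const)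
  have hED : ⋃ i, E i = D := by
    ext x
    simp only [Set.mem_iUnion, hEdef, Set.mem_setOf_eq, hDdef]
    constructor
    · rintro ⟨i, hi, -⟩
      intro hfx
      rw [hfx] at hi
      simp only [abs_zero] at hi
      exact absurd hi (not_le.2 (zpow_pos two_pos i))
    · intro hfx
      obtain ⟨i, hi1, hi2⟩ := exists_mem_Ico_zpow (abs_pos.2 hfx) one_lt_two
      exact ⟨i, hi1, hi2⟩
  have hEdisj : Pairwise (Function.onFun Disjoint E) := by
    have key : ∀ i j : ℤ, i < j → Disjoint (E i) (E j) := by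
      intro i j hij
      rw [Set.disjoint_left]
      rintro x ⟨-, hi2⟩ ⟨hj1, -⟩
      have : (2:ℝ)^(i+1) ≤ 2^j := zpow_le_zpow_right₀ one_le_two (by omega)
      linarith
    intro i j hij
    rcases lt_or_gt_of_ne hij with h | h
    · exact key i j h
    · exact (key j i h).symm
  -- sigma-finite pieces
  set d : ℕ → Set X := disjointed (spanningSets μ) with hddef
  have hd : ∀ k, MeasurableSet (d k) :=
    MeasurableSet.disjointed (measurableSet_spanningSets μ)
  have hddisj : Pairwise (Function.onFun Disjoint d) := disjoint_disjointed _
  have hdt : ∀ k, μ (d k) < ⊤ := fun k =>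
    lt_of_le_of_lt (measure_mono (disjointed_subset _ _)) (measure_spanningSets_lt_top μ k)
  have hdU : ⋃ k, d k = Set.univ := by
    rw [hddef, iUnion_disjointed, iUnion_spanningSets]
  -- pieces
  set piece : ℤ × ℕ → Set X := fun p => E p.1 ∩ d p.2 with hpiecedef
  have hpm : ∀ p, MeasurableSet (piece p) := fun p => (hE p.1).inter (hd p.2)
  have hpt : ∀ p, μ (piece p) < ⊤ := fun p =>
    lt_of_le_of_lt (measure_mono Set.inter_subset_right) (hdt p.2)
  have hpdisj : Pairwise (Function.onFun Disjoint piece) := by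
    rintro ⟨i, k⟩ ⟨j, l⟩ hne
    by_cases hij : i = j
    · have hkl : k ≠ l := by
        intro h
        exact hne (by rw [Prod.mk.injEq]; exact ⟨hij, h⟩)
      exact Disjoint.mono Set.inter_subset_right Set.inter_subset_right (hddisj hkl)
    · exact Disjoint.mono Set.inter_subset_left Set.inter_subset_left (hEdisj hij)
  have hpU : ⋃ p, piece p = D := by
    ext x
    simp only [Set.mem_iUnion, hpiecedef, Set.mem_inter_iff, Prod.exists]
    constructor
    · rintro ⟨i, k, hxi, -⟩
      rw [← hED]
      exact Set.mem_iUnion.2 ⟨i, hxi⟩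
    · intro hx
      rw [← hED] at hx
      obtain ⟨i, hi⟩ := Set.mem_iUnion.1 hx
      have : x ∈ ⋃ k, d k := by rw [hdU]; trivial
      obtain ⟨k, hk⟩ := Set.mem_iUnion.1 this
      exact ⟨i, k, hi, hk⟩
  -- the family
  set Pfam : Set (Set X) := {A | (∃ p : ℤ × ℕ, A = piece p) ∧ μ A ≠ 0} with hPdef
  have hPc : Pfam.Countable := by
    refine (Set.countable_range piece).mono ?_
    rintro A ⟨⟨p, hp⟩, -⟩
    exact ⟨p, hp.symm⟩
  have hPne : Pfam.Nonempty := by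
    by_contra hne
    rw [Set.not_nonempty_iff_eq_empty] at hne
    refine hD0 (le_antisymm ?_ zero_le)
    have hz : ∀ p : ℤ × ℕ, μ (piece p) = 0 := by
      intro p
      by_contra hp
      have : piece p ∈ Pfam := ⟨⟨p, rfl⟩, hp⟩
      rw [hne] at this
      exact this
    calc μ D = μ (⋃ p, piece p) := by rw [hpU]
      _ ≤ ∑' p, μ (piece p) := measure_iUnion_le _
      _ = 0 := by simp [hz]
  obtain ⟨F, hF⟩ := hPc.exists_eq_range hPne
  have hFmem : ∀ i : ℕ, F i ∈ Pfam := by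
    intro i
    rw [hF]
    exact Set.mem_range_self i
  have hF0 : ∀ i, 0 < μ (F i) := fun i => pos_iff_ne_zero.2 (hFmem i).2
  have hFt : ∀ i, μ (F i) < ⊤ := by
    intro i
    obtain ⟨⟨p, hp⟩, -⟩ := hFmem i
    rw [hp]
    exact hpt p
  have hFmeas : ∀ i, MeasurableSet (F i) := by
    intro i
    obtain ⟨⟨p, hp⟩, -⟩ := hFmem i
    rw [hp]
    exact hpm p
  -- the sequence β
  have hfreq : ∀ j : ℕ, ∃ᶠ n in atTop,
      (1 ≤ n ∧ luxNorm Φ μ (f ∘ φ^[n]) < ((j : ℝ≥0∞) + 1)⁻¹) := by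
    intro j
    have hpos : (0 : ℝ≥0∞) < ((j : ℝ≥0∞) + 1)⁻¹ :=
      ENNReal.inv_pos.2 (by simp)
    have hlt : atTop.liminf (fun n : ℕ => luxNorm Φ μ (f ∘ φ^[n])) < ((j : ℝ≥0∞) + 1)⁻¹ := by
      rw [hlim0]; exact hpos
    have hfr := Filter.frequently_lt_of_liminf_lt (by isBoundedDefault) hlt
    exact ((hfr.and_eventually (Filter.eventually_ge_atTop 1)).mono fun n hn => ⟨hn.2, hn.1⟩)
  obtain ⟨β, hβmono, hβ⟩ := Filter.extraction_forall_of_frequently hfreq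
  refine ⟨F, β, hβmono, fun j => (hβ j).1, hFmeas, hF0, hFt, ?_, ?_⟩
  · -- condition (I)
    intro i
    obtain ⟨⟨p, hp⟩, -⟩ := hFmem i
    set δ : ℝ := (2:ℝ) ^ p.1 with hδdef
    have hδ : 0 < δ := zpow_pos two_pos _
    have hsub : ∀ x ∈ F i, δ ≤ |f x| := by
      rw [hp]
      rintro x ⟨⟨h1, -⟩, -⟩
      exact h1
    refine ENNReal.tendsto_nhds_top fun M => ?_
    have hδM : ENNReal.ofReal (δ / (M + 1)) ≠ 0 :=
      (ENNReal.ofReal_pos.2 (by positivity)).ne'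
    obtain ⟨n₀, hn₀⟩ := ENNReal.exists_inv_nat_lt hδM
    filter_upwards [Filter.eventually_ge_atTop n₀] with j hj
    have hlt : luxNorm Φ μ (f ∘ φ^[β j]) < ENNReal.ofReal (δ / (M + 1)) := by
      refine lt_of_lt_of_le (hβ j).2 (le_trans ?_ hn₀.le)
      apply ENNReal.inv_le_inv.2
      have hcast : ((n₀ : ℕ) : ℝ≥0∞) ≤ ((j : ℕ) : ℝ≥0∞) + 1 := by
        have : (n₀ : ℕ) ≤ j + 1 := by omega
        exact_mod_cast this
      exact hcast
    obtain ⟨k, hk, hintk, hklt⟩ := luxNorm_lt_exists hlt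
    have hkR : k < δ / (M + 1) := (ENNReal.ofReal_lt_ofReal_iff (by positivity)).1 hklt
    have hA : ∀ x ∈ φ^[β j] ⁻¹' F i, δ ≤ |(f ∘ φ^[β j]) x| := fun x hx => hsub _ hx
    have hkey := lux_key (μ := μ) hΦ (hfm.comp (hφ.iterate (β j))) hδ hk hA hintk
    have hMδk : (M : ℝ) < δ / k := by
      have h1 : k * (M + 1) < δ := (lt_div_iff₀ (by positivity)).1 hkR
      have h2 : (M : ℝ) + 1 < δ / k := (lt_div_iff₀ hk).2 (by linarith)
      linarith
    calc (M : ℝ≥0∞) = ENNReal.ofReal (M : ℝ) := (ENNReal.ofReal_natCast M).symm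
      _ < ENNReal.ofReal (δ / k) :=
          (ENNReal.ofReal_lt_ofReal_iff (by positivity)).2 hMδk
      _ ≤ youngInv Φ (1 / μ (φ^[β j] ⁻¹' F i)) := hkey
  · -- condition (II)
    by_contra hsup
    set S := ⨆ (i : ℕ) (n : ℕ),
      youngInv Φ (1 / μ (F i)) / youngInv Φ (1 / μ (φ^[n] ⁻¹' F i)) with hSdef
    have hS : S ≠ ⊤ := hsup
    obtain ⟨nS, hnS⟩ := ENNReal.exists_nat_gt hS
    have hm2 : 2 * S ≤ 2 ^ (nS + 1) := by
      calc 2 * S ≤ 2 * (nS : ℝ≥0∞) := mul_le_mul_right hnS.le 2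
      _ ≤ 2 * 2 ^ nS := by
          gcongr
          exact_mod_cast Nat.le_of_lt (Nat.lt_two_pow_self (n := nS))
      _ = 2 ^ (nS + 1) := by ring
    set m := nS + 1 with hmdef
    have hpieceQ : ∀ (p : ℤ × ℕ) (n : ℕ),
        μ (φ^[n] ⁻¹' piece p) ≤ (K : ℝ≥0∞) ^ (m + 1) * μ (piece p) := by
      intro p n
      by_cases hp0 : μ (piece p) = 0
      · have hle := iterate_preimage_le hφ hbound (hpm p) n
        rw [hp0, mul_zero] at hle
        simpa [hp0] using hle
      · obtain ⟨i, hi⟩ : ∃ i, F i = piece p := by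
          have hmem : piece p ∈ Pfam := ⟨⟨p, rfl⟩, hp0⟩
          rw [hF] at hmem
          exact hmem
        have hratio : youngInv Φ (1 / μ (piece p)) /
            youngInv Φ (1 / μ (φ^[n] ⁻¹' piece p)) ≤ S := by
          rw [← hi, hSdef]
          exact le_iSup₂ (f := fun i n =>
            youngInv Φ (1 / μ (F i)) / youngInv Φ (1 / μ (φ^[n] ⁻¹' F i))) i n
        exact piece_bound hΦ hK0 hK hp0 (hpt p).ne hS hm2 hratio
    -- ∫ Φ (f) < ⊤
    obtain ⟨m₁, hm₁⟩ := pow_unbounded_of_one_lt (1 / k₀) (one_lt_two (α := ℝ))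
    have hKmt : ∀ l : ℕ, ((K : ℝ≥0∞)) ^ l ≠ ⊤ :=
      fun l => (ENNReal.pow_lt_top ENNReal.coe_lt_top).ne
    have hB₀ : ∫⁻ x, Φ (f x) ∂μ < ⊤ := by
      have hk1 : 1 ≤ 2 ^ m₁ * k₀ := by
        have := (div_lt_iff₀ hk₀).1 hm₁
        linarith
      have hpt1 : ∀ x : X, Φ (f x) ≤ (K : ℝ≥0∞) ^ m₁ * Φ (k₀ * f x) := by
        intro x
        have h1 : |f x| ≤ 2 ^ m₁ * (k₀ * |f x|) := by
          nlinarith [abs_nonneg (f x)]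
        calc Φ (f x) = Φ |f x| := (hΦ.abs_eq _).symm
          _ ≤ Φ (2 ^ m₁ * (k₀ * |f x|)) := hΦ.mono (abs_nonneg _) h1
          _ ≤ (K : ℝ≥0∞) ^ m₁ * Φ (k₀ * |f x|) := delta2_pow hΦ hK m₁ _ (by positivity)
          _ = (K : ℝ≥0∞) ^ m₁ * Φ (k₀ * f x) := by
              congr 1
              rw [← hΦ.abs_eq (k₀ * f x), abs_mul, abs_of_pos hk₀]
      calc ∫⁻ x, Φ (f x) ∂μ ≤ ∫⁻ x, (K : ℝ≥0∞) ^ m₁ * Φ (k₀ * f x) ∂μ := lintegral_mono hpt1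
        _ = (K : ℝ≥0∞) ^ m₁ * ∫⁻ x, Φ (k₀ * f x) ∂μ := lintegral_const_mul' _ _ (hKmt m₁)
        _ < ⊤ := ENNReal.mul_lt_top (ENNReal.pow_lt_top ENNReal.coe_lt_top) hint₀
    -- uniform integral bound
    set C : ℝ≥0∞ := (K : ℝ≥0∞) ^ (m + 2) with hCdef
    have hBn : ∀ n : ℕ, ∫⁻ x, Φ ((f ∘ φ^[n]) x) ∂μ ≤ C * ∫⁻ x, Φ (f x) ∂μ := by
      intro n
      have hU : MeasurableSet (φ^[n] ⁻¹' D) := (hφ.iterate n) hD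
      have hsplit : ∫⁻ x, Φ ((f ∘ φ^[n]) x) ∂μ
          = ∫⁻ x in φ^[n] ⁻¹' D, Φ ((f ∘ φ^[n]) x) ∂μ := by
        rw [← lintegral_add_compl (fun x => Φ ((f ∘ φ^[n]) x)) hU]
        have hz : ∫⁻ x in (φ^[n] ⁻¹' D)ᶜ, Φ ((f ∘ φ^[n]) x) ∂μ = 0 := by
          have hz0 : ∀ x ∈ (φ^[n] ⁻¹' D)ᶜ, Φ ((f ∘ φ^[n]) x) ≤ 0 := by
            intro x hx
            simp only [Set.mem_compl_iff, Set.mem_preimage, hDdef, Set.mem_setOf_eq,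
              not_not] at hx
            simp [Function.comp, hx, hΦ.map_zero]
          refine le_antisymm ?_ zero_le
          calc ∫⁻ x in (φ^[n] ⁻¹' D)ᶜ, Φ ((f ∘ φ^[n]) x) ∂μ
              ≤ ∫⁻ _x in (φ^[n] ⁻¹' D)ᶜ, 0 ∂μ := setLIntegral_mono' hU.compl hz0
            _ = 0 := by simp
        rw [hz, add_zero]
      have hterm : ∀ p : ℤ × ℕ, ∫⁻ x in φ^[n] ⁻¹' piece p, Φ ((f ∘ φ^[n]) x) ∂μ
          ≤ C * ∫⁻ x in piece p, Φ (f x) ∂μ := by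
        intro p
        have hub : ∀ x ∈ φ^[n] ⁻¹' piece p, Φ ((f ∘ φ^[n]) x) ≤ Φ ((2:ℝ) ^ (p.1 + 1)) := by
          intro x hx
          obtain ⟨⟨-, h2⟩, -⟩ := hx
          calc Φ ((f ∘ φ^[n]) x) = Φ |f (φ^[n] x)| := (hΦ.abs_eq _).symm
            _ ≤ Φ ((2:ℝ) ^ (p.1 + 1)) := hΦ.mono (abs_nonneg _) h2.le
        have hlb : ∀ x ∈ piece p, Φ ((2:ℝ) ^ p.1) ≤ Φ (f x) := by
          intro x hx
          obtain ⟨⟨h1, -⟩, -⟩ := hx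
          calc Φ ((2:ℝ) ^ p.1) ≤ Φ |f x| := hΦ.mono (by positivity) h1
            _ = Φ (f x) := hΦ.abs_eq _
        calc ∫⁻ x in φ^[n] ⁻¹' piece p, Φ ((f ∘ φ^[n]) x) ∂μ
            ≤ ∫⁻ _x in φ^[n] ⁻¹' piece p, Φ ((2:ℝ) ^ (p.1 + 1)) ∂μ :=
              setLIntegral_mono' ((hφ.iterate n) (hpm p)) hub
          _ = Φ ((2:ℝ) ^ (p.1 + 1)) * μ (φ^[n] ⁻¹' piece p) := setLIntegral_const _ _
          _ ≤ ((K : ℝ≥0∞) * Φ ((2:ℝ) ^ p.1)) * ((K : ℝ≥0∞) ^ (m + 1) * μ (piece p)) := by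
              gcongr
              · have h2 : (2:ℝ) ^ (p.1 + 1) = 2 * 2 ^ p.1 := by
                  rw [zpow_add_one₀ (two_ne_zero)]
                  ring
                rw [h2]
                exact hK _ (by positivity)
              · exact hpieceQ p n
          _ = C * (Φ ((2:ℝ) ^ p.1) * μ (piece p)) := by rw [hCdef]; ring
          _ ≤ C * ∫⁻ x in piece p, Φ (f x) ∂μ := by
              gcongr
              calc Φ ((2:ℝ) ^ p.1) * μ (piece p)
                  = ∫⁻ _x in piece p, Φ ((2:ℝ) ^ p.1) ∂μ := (setLIntegral_const _ _).symm
                _ ≤ ∫⁻ x in piece p, Φ (f x) ∂μ := setLIntegral_mono' (hpm p) hlb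
      have hpdisjn : Pairwise (Function.onFun Disjoint fun p => φ^[n] ⁻¹' piece p) :=
        fun p q hpq => (hpdisj hpq).preimage _
      calc ∫⁻ x, Φ ((f ∘ φ^[n]) x) ∂μ
          = ∫⁻ x in φ^[n] ⁻¹' D, Φ ((f ∘ φ^[n]) x) ∂μ := hsplit
        _ = ∑' p : ℤ × ℕ, ∫⁻ x in φ^[n] ⁻¹' piece p, Φ ((f ∘ φ^[n]) x) ∂μ := by
            rw [← hpU, Set.preimage_iUnion]
            exact lintegral_iUnion (fun p => (hφ.iterate n) (hpm p)) hpdisjn _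
        _ ≤ ∑' p : ℤ × ℕ, C * ∫⁻ x in piece p, Φ (f x) ∂μ := ENNReal.tsum_le_tsum hterm
        _ = C * ∑' p : ℤ × ℕ, ∫⁻ x in piece p, Φ (f x) ∂μ := ENNReal.tsum_mul_left
        _ = C * ∫⁻ x in D, Φ (f x) ∂μ := by
            rw [← hpU, lintegral_iUnion hpm hpdisj]
        _ ≤ C * ∫⁻ x, Φ (f x) ∂μ := by
            gcongr
            exact Measure.restrict_le_self
    set B := C * ∫⁻ x, Φ (f x) ∂μ with hBdef
    have hBt : B ≠ ⊤ := ENNReal.mul_ne_top (hKmt _) hB₀.ne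
    have hall : ∀ n : ℕ, luxNorm Φ μ (f ∘ φ^[n]) ≤ ENNReal.ofReal (max 1 (B.toReal + 1)) :=
      fun n => luxNorm_le_of_lintegral_le hΦ hBt (hBn n)
    have hls : atTop.limsup (fun n : ℕ => luxNorm Φ μ (f ∘ φ^[n]))
        ≤ ENNReal.ofReal (max 1 (B.toReal + 1)) :=
      Filter.limsup_le_of_le (by isBoundedDefault) (Filter.Eventually.of_forall hall)
    rw [hlimtop] at hls
    exact absurd hls (not_le.2 ENNReal.ofReal_lt_top)
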